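/- As α → 0⁺, f(α) = 1/4 - ln(-ln α)/(8 ln α) + o(ln(-ln α)/ln α), where f(α) = ((1-2α)/2) ln((1-α)/α) / (Φ⁻¹(α))². -/

import Mathlib

/-!
Substitute `α = Φ(x)` with `x → -∞`. The Mills-ratio bounds
`φ(x) / |x| · (1 + x⁻²)⁻¹ ≤ Φ(x) ≤ φ(x) / |x|`, obtained by comparing `Φ(x)` with the
integrals of `-y φ(y)` and of `φ(y) (1 + y⁻²)` (whose primitives are `φ` and `-φ(y) / y`), give
`-2 log Φ(x) = x² + log x² + log 2π + o(1)`. Inverting this relation,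
`Φ⁻¹(α)² = -2 log α - log (-log α) - log 4π + o(1)`.
With `L = -log α`, `M = log L`, `E = Φ⁻¹(α)² - 2L + M = o(M)` and
`d = (1/2 - α) log (1 - α) + α log α → 0`, the normalized error is exactly
`L / (8 Φ⁻¹(α)²) · (2E/M + E/L - M/L - 8d/M)`, which tends to `1/16 · 0`.
-/

open Real Set Filter Topology

noncomputable def phi (y : ℝ) : ℝ := (Real.sqrt (2 * Real.pi))⁻¹ * Real.exp (-y ^ 2 / 2)

noncomputable def Phi (x : ℝ) : ℝ := ∫ y in Set.Iic x, phi y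

noncomputable def PhiInv (a : ℝ) : ℝ := Function.invFun Phi a

open MeasureTheory ProbabilityTheory Asymptotics

lemma tendsto_sq_atBot_atTop {R : Type*} [Ring R] [LinearOrder R] [IsStrictOrderedRing R] :
    Tendsto (fun x : R => x ^ 2) atBot atTop := by
  simpa only [Function.comp_def, neg_sq] using
    (tendsto_pow_atTop two_ne_zero).comp (tendsto_neg_atBot_atTop (G := R))

lemma phi_eq_gaussianPDFReal : phi = gaussianPDFReal 0 1 := by
  ext y
  simp [phi, gaussianPDFReal]

lemma phi_pos (y : ℝ) : 0 < phi y :=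
  phi_eq_gaussianPDFReal ▸ gaussianPDFReal_pos 0 1 y one_ne_zero

lemma integrable_phi : Integrable phi :=
  phi_eq_gaussianPDFReal ▸ integrable_gaussianPDFReal 0 1

lemma continuous_phi : Continuous phi := by
  unfold phi
  fun_prop

lemma log_phi (y : ℝ) : log (phi y) = -(y ^ 2 + log (2 * π)) / 2 := by
  rw [phi, log_mul (by positivity) (exp_ne_zero _), log_inv, log_exp, log_sqrt (by positivity)]
  ring

lemma hasDerivAt_phi (y : ℝ) : HasDerivAt phi (-y * phi y) y := by
  have h := ((hasDerivAt_pow 2 y).div_const 2).fun_neg.exp.const_mul (√(2 * π))⁻¹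
  have hphi : phi = fun z => (√(2 * π))⁻¹ * exp (-(z ^ 2 / 2)) := by
    ext z
    rw [phi, neg_div]
  rw [hphi]
  exact h.congr_deriv (by push_cast; ring)

lemma tendsto_phi_atBot : Tendsto phi atBot (𝓝 0) := by
  have h := (tendsto_exp_comp_nhds_zero.2 (tendsto_neg_atTop_atBot.comp
    (tendsto_sq_atBot_atTop.atTop_div_const two_pos))).const_mul (√(2 * π))⁻¹
  rw [mul_zero] at h
  exact h.congr fun y => by rw [Function.comp_apply, phi, neg_div]

lemma tendsto_phi_div_neg_atBot : Tendsto (fun x => phi x / -x) atBot (𝓝 0) := by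
  simpa [div_eq_mul_inv] using (tendsto_phi_atBot.mul tendsto_inv_atBot_zero).neg

lemma integrable_neg_mul_phi : Integrable fun y => -y * phi y := by
  have h := (integrable_mul_exp_neg_mul_sq (b := 1 / 2) one_half_pos).const_mul (-(√(2 * π))⁻¹)
  refine h.congr (ae_of_all _ fun y => ?_)
  simp only [phi]
  ring_nf

lemma integral_Iic_neg_mul_phi (x : ℝ) : ∫ y in Iic x, -y * phi y = phi x := by
  simpa using integral_Iic_of_hasDerivAt_of_tendsto' (fun y _ => hasDerivAt_phi y)
    integrable_neg_mul_phi.integrableOn tendsto_phi_atBot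

lemma integrableOn_phi_mul_one_add_inv_sq {x : ℝ} (hx : x < 0) :
    IntegrableOn (fun y => phi y * (1 + (y ^ 2)⁻¹)) (Iic x) := by
  refine integrable_phi.integrableOn.mul_bdd (c := 1 + (x ^ 2)⁻¹) (by fun_prop) ?_
  refine (ae_restrict_iff' measurableSet_Iic).2 (ae_of_all _ fun y (hy : y ≤ x) => ?_)
  rw [Real.norm_of_nonneg (by positivity)]
  gcongr 1 + ?_
  exact inv_anti₀ (by nlinarith) (by nlinarith)

lemma integral_Iic_phi_mul_one_add_inv_sq {x : ℝ} (hx : x < 0) :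
    ∫ y in Iic x, phi y * (1 + (y ^ 2)⁻¹) = phi x / -x := by
  have hderiv : ∀ y ∈ Iic x, HasDerivAt (fun y => -(phi y / y)) (phi y * (1 + (y ^ 2)⁻¹)) y := by
    intro y (hy : y ≤ x)
    have hy0 : y ≠ 0 := by linarith
    exact ((hasDerivAt_phi y).div (hasDerivAt_id' y) hy0).fun_neg.congr_deriv (by field_simp; ring)
  have hlim : Tendsto (fun y => -(phi y / y)) atBot (𝓝 0) := by
    simpa only [div_neg] using tendsto_phi_div_neg_atBot
  rw [integral_Iic_of_hasDerivAt_of_tendsto' hderiv (integrableOn_phi_mul_one_add_inv_sq hx) hlim]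
  ring

lemma Phi_le_phi_div {x : ℝ} (hx : x < 0) : Phi x ≤ phi x / -x := by
  calc Phi x ≤ ∫ y in Iic x, -y * phi y / -x := by
        refine setIntegral_mono_on integrable_phi.integrableOn
          (integrable_neg_mul_phi.div_const _).integrableOn measurableSet_Iic fun y (hy : y ≤ x) => ?_
        rw [le_div_iff₀ (by linarith)]
        nlinarith [phi_pos y]
    _ = phi x / -x := by rw [integral_div, integral_Iic_neg_mul_phi]

lemma phi_div_le_Phi_mul {x : ℝ} (hx : x < 0) : phi x / -x ≤ Phi x * (1 + (x ^ 2)⁻¹) := by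
  rw [← integral_Iic_phi_mul_one_add_inv_sq hx, Phi, ← integral_mul_const]
  refine setIntegral_mono_on (integrableOn_phi_mul_one_add_inv_sq hx)
    (integrable_phi.mul_const _).integrableOn measurableSet_Iic fun y (hy : y ≤ x) => ?_
  gcongr phi y * (1 + ?_)
  · exact (phi_pos y).le
  · exact inv_anti₀ (by nlinarith) (by nlinarith)

lemma Phi_sub_Phi (a b : ℝ) : Phi b - Phi a = ∫ y in a..b, phi y :=
  intervalIntegral.integral_Iic_sub_Iic integrable_phi.integrableOn integrable_phi.integrableOn

lemma continuous_Phi : Continuous Phi := by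
  have h : Phi = fun x => Phi 0 + ∫ y in (0 : ℝ)..x, phi y := by
    ext x
    rw [← Phi_sub_Phi, add_sub_cancel]
  rw [h]
  exact continuous_const.add
    (intervalIntegral.continuous_primitive (fun _ _ => integrable_phi.intervalIntegrable) 0)

lemma strictMono_Phi : StrictMono Phi := fun a b hab => by
  have h := intervalIntegral.intervalIntegral_pos_of_pos_on
    integrable_phi.intervalIntegrable (fun y _ => phi_pos y) hab
  linarith [Phi_sub_Phi a b]

lemma Phi_pos (x : ℝ) : 0 < Phi x :=
  (setIntegral_nonneg measurableSet_Iic fun y _ => (phi_pos y).le).trans_lt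
    (strictMono_Phi (sub_one_lt x))

lemma tendsto_Phi_atBot : Tendsto Phi atBot (𝓝 0) := by
  refine tendsto_of_tendsto_of_tendsto_of_le_of_le' tendsto_const_nhds tendsto_phi_div_neg_atBot
    (Eventually.of_forall fun x => (Phi_pos x).le) ?_
  filter_upwards [eventually_lt_atBot 0] with x hx using Phi_le_phi_div hx

lemma Phi_PhiInv {α : ℝ} (h0 : 0 < α) (h1 : α < Phi 0) : Phi (PhiInv α) = α := by
  obtain ⟨a, ha⟩ := (tendsto_Phi_atBot.eventually (eventually_lt_nhds h0)).exists
  exact Function.invFun_eq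
    (mem_range_of_exists_le_of_exists_ge continuous_Phi ⟨a, ha.le⟩ ⟨0, h1.le⟩)

lemma tendsto_PhiInv : Tendsto PhiInv (𝓝[>] 0) atBot := by
  refine tendsto_atBot.2 fun b => ?_
  have hb : Phi (min b 0) ≤ Phi 0 := strictMono_Phi.monotone (min_le_right b 0)
  filter_upwards [Ioo_mem_nhdsGT (Phi_pos (min b 0))] with α ⟨h0, h1⟩
  rw [← Phi_PhiInv h0 (h1.trans_le hb)] at h1
  exact (strictMono_Phi.lt_iff_lt.1 h1).le.trans (min_le_left b 0)

lemma tendsto_Phi_div_phi_div : Tendsto (fun x => Phi x / (phi x / -x)) atBot (𝓝 1) := by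
  have hinv_sq : Tendsto (fun x : ℝ => (x ^ 2)⁻¹) atBot (𝓝 0) := by
    simpa [sq] using tendsto_inv_atBot_zero.mul (tendsto_inv_atBot_zero (𝕜 := ℝ))
  have hlower : Tendsto (fun x : ℝ => (1 + (x ^ 2)⁻¹)⁻¹) atBot (𝓝 1) := by
    simpa using (tendsto_const_nhds.add hinv_sq).inv₀ (by norm_num : (1 : ℝ) + 0 ≠ 0)
  refine tendsto_of_tendsto_of_tendsto_of_le_of_le' hlower tendsto_const_nhds ?_ ?_
  all_goals filter_upwards [eventually_lt_atBot 0] with x hx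
  all_goals have hpos : 0 < phi x / -x := div_pos (phi_pos x) (neg_pos.2 hx)
  · rw [inv_le_iff_one_le_mul₀ (by positivity), div_mul_eq_mul_div, le_div_iff₀ hpos, one_mul]
    exact phi_div_le_Phi_mul hx
  · exact (div_le_one hpos).2 (Phi_le_phi_div hx)

lemma tendsto_neg_two_mul_log_Phi_sub_sq_sub_log_sq :
    Tendsto (fun x => -2 * log (Phi x) - x ^ 2 - log (x ^ 2)) atBot (𝓝 (log (2 * π))) := by
  have hlog := (continuousAt_log one_ne_zero).tendsto.comp tendsto_Phi_div_phi_div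
  rw [log_one] at hlog
  have h := tendsto_const_nhds (x := log (2 * π)) |>.sub (hlog.const_mul 2)
  rw [mul_zero, sub_zero] at h
  refine h.congr' ?_
  filter_upwards [eventually_lt_atBot 0] with x hx
  have hx' : -x ≠ 0 := by linarith
  rw [Function.comp_apply, log_div (Phi_pos x).ne' (div_pos (phi_pos x) (neg_pos.2 hx)).ne',
    log_div (phi_pos x).ne' hx', log_phi, log_pow, ← log_neg_eq_log x]
  push_cast
  ring

lemma tendsto_sub_add_log_of_tendsto_sub_sub_log {ι : Type*} {l : Filter ι} {t s : ι → ℝ}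
    {c : ℝ} (ht : Tendsto t l atTop) (h : Tendsto (fun i => s i - t i - log (t i)) l (𝓝 c)) :
    Tendsto (fun i => t i - s i + log (s i)) l (𝓝 (-c)) := by
  have hratio : Tendsto (fun i => s i / t i) l (𝓝 1) := by
    have hlog := isLittleO_log_id_atTop.tendsto_div_nhds_zero.comp ht
    have := (tendsto_const_nhds (x := (1 : ℝ))).add (hlog.add (h.div_atTop ht))
    rw [add_zero, add_zero] at this
    refine this.congr' ?_
    filter_upwards [ht.eventually_gt_atTop 0] with i hi
    simp only [Function.comp_apply, id]
    field_simp
    ring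
  have hlog_ratio := (continuousAt_log one_ne_zero).tendsto.comp hratio
  rw [log_one] at hlog_ratio
  have := h.neg.add hlog_ratio
  rw [add_zero] at this
  refine this.congr' ?_
  filter_upwards [ht.eventually_gt_atTop 0, hratio.eventually (lt_mem_nhds one_pos)]
    with i hi hsi
  have hs : s i ≠ 0 := fun h0 => by simp [h0] at hsi
  rw [Function.comp_apply, log_div hs hi.ne']
  ring

lemma tendsto_sq_add_two_mul_log_Phi_add_log_neg_log_Phi :
    Tendsto (fun x => x ^ 2 + 2 * log (Phi x) + log (-log (Phi x))) atBot
      (𝓝 (-log (4 * π))) := by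
  have h := (tendsto_sub_add_log_of_tendsto_sub_sub_log tendsto_sq_atBot_atTop
    tendsto_neg_two_mul_log_Phi_sub_sq_sub_log_sq).sub_const (log 2)
  have hval : -log (4 * π) = -log (2 * π) - log 2 := by
    rw [show (4 : ℝ) * π = 2 * (2 * π) by ring, log_mul two_ne_zero (by positivity)]
    ring
  rw [hval]
  refine h.congr' ?_
  filter_upwards [tendsto_Phi_atBot.eventually (gt_mem_nhds one_pos)] with x hx
  have hlog : -log (Phi x) ≠ 0 := (neg_pos.2 (log_neg (Phi_pos x) hx)).ne'
  rw [show -2 * log (Phi x) = 2 * -log (Phi x) by ring, log_mul two_ne_zero hlog]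
  ring

lemma tendsto_neg_log_nhdsGT_zero : Tendsto (fun a => -log a) (𝓝[>] 0) atTop :=
  tendsto_neg_atBot_atTop.comp tendsto_log_nhdsGT_zero

lemma tendsto_log_neg_log_nhdsGT_zero : Tendsto (fun a => log (-log a)) (𝓝[>] 0) atTop :=
  tendsto_log_atTop.comp tendsto_neg_log_nhdsGT_zero

lemma isLittleO_log_neg_log_neg_log :
    (fun a => log (-log a)) =o[𝓝[>] 0] fun a => -log a :=
  isLittleO_log_id_atTop.comp_tendsto tendsto_neg_log_nhdsGT_zero

lemma isLittleO_sq_PhiInv_add_two_mul_log_add_log_neg_log :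
    (fun a => PhiInv a ^ 2 + 2 * log a + log (-log a)) =o[𝓝[>] 0] fun a => log (-log a) := by
  have h := tendsto_sq_add_two_mul_log_Phi_add_log_neg_log_Phi.comp tendsto_PhiInv
  replace h : Tendsto (fun a => PhiInv a ^ 2 + 2 * log a + log (-log a)) (𝓝[>] 0)
      (𝓝 (-log (4 * π))) := by
    refine h.congr' ?_
    filter_upwards [Ioo_mem_nhdsGT (Phi_pos 0)] with a ⟨h0, h1⟩
    rw [Function.comp_apply, Phi_PhiInv h0 h1]
  exact (h.isBigO_one ℝ).trans_isLittleO
    ((isLittleO_one_left_iff ℝ).2 (tendsto_norm_atTop_atTop.comp tendsto_log_neg_log_nhdsGT_zero))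

lemma tendsto_div_neg_log_of_isLittleO {t : ℝ → ℝ}
    (ht : (fun a => t a + 2 * log a + log (-log a)) =o[𝓝[>] 0] fun a => log (-log a)) :
    Tendsto (fun a => t a / -log a) (𝓝[>] 0) (𝓝 2) := by
  have h := ((ht.trans isLittleO_log_neg_log_neg_log).tendsto_div_nhds_zero.sub
    isLittleO_log_neg_log_neg_log.tendsto_div_nhds_zero).add_const 2
  rw [sub_zero, zero_add] at h
  refine h.congr' ?_
  filter_upwards [tendsto_neg_log_nhdsGT_zero.eventually_gt_atTop 0] with a ha
  have hlog : log a ≠ 0 := (neg_pos.1 ha).ne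
  field_simp
  ring

lemma tendsto_one_half_sub_mul_log_one_sub_add_mul_log :
    Tendsto (fun a : ℝ => (1 / 2 - a) * log (1 - a) + a * log a) (𝓝[>] 0) (𝓝 0) := by
  have hcont : ContinuousAt (fun a : ℝ => (1 / 2 - a) * log (1 - a) + a * log a) 0 :=
    ((continuousAt_const.sub continuousAt_id).mul
      ((continuousAt_log (by norm_num)).comp (continuousAt_const.sub continuousAt_id))).add
      continuous_mul_log.continuousAt
  simpa using hcont.tendsto.mono_left nhdsWithin_le_nhds

lemma tendsto_normalized_error_of_isLittleO {t : ℝ → ℝ}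
    (ht : (fun a => t a + 2 * log a + log (-log a)) =o[𝓝[>] 0] fun a => log (-log a)) :
    Tendsto (fun a => ((1 - 2 * a) / 2 * log ((1 - a) / a) / t a
        - (1 / 4 - log (-log a) / (8 * log a))) / (log (-log a) / log a)) (𝓝[>] 0) (𝓝 0) := by
  have hM := tendsto_log_neg_log_nhdsGT_zero
  have hML := isLittleO_log_neg_log_neg_log.tendsto_div_nhds_zero
  have hEM := ht.tendsto_div_nhds_zero
  have hEL := (ht.trans isLittleO_log_neg_log_neg_log).tendsto_div_nhds_zero
  have htL := tendsto_div_neg_log_of_isLittleO ht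
  have hLt : Tendsto (fun a => -log a / t a) (𝓝[>] 0) (𝓝 (1 / 2)) := by
    simpa only [inv_div, one_div] using htL.inv₀ two_ne_zero
  have h := (hLt.div_const 8).mul ((((hEM.const_mul 2).add hEL).sub hML).sub
    ((tendsto_one_half_sub_mul_log_one_sub_add_mul_log.div_atTop hM).const_mul 8))
  simp only [mul_zero, add_zero, sub_zero] at h
  refine h.congr' ?_
  filter_upwards [Ioo_mem_nhdsGT one_pos, tendsto_neg_log_nhdsGT_zero.eventually_gt_atTop 0,
    hM.eventually_gt_atTop 0, htL.eventually (lt_mem_nhds two_pos)]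
    with a ⟨ha0, ha1⟩ hL0 hM0 htL0
  have ht0 : t a ≠ 0 := fun h0 => by simp [h0] at htL0
  have hlog : log a ≠ 0 := (neg_pos.1 hL0).ne
  rw [log_div (by linarith) ha0.ne']
  field_simp
  ring

theorem f_rate :
    Filter.Tendsto
      (fun α : ℝ =>
        (((1 - 2 * α) / 2 * Real.log ((1 - α) / α)) / (PhiInv α) ^ 2
            - (1 / 4 - Real.log (-Real.log α) / (8 * Real.log α)))
          / (Real.log (-Real.log α) / Real.log α))
      (𝓝[>] 0) (𝓝 0) :=
  tendsto_normalized_error_of_isLittleO isLittleO_sq_PhiInv_add_two_mul_log_add_log_neg_log
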